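/- Let H be a reproducing kernel Hilbert space setting: Φ : X → ℍ a feature map into a Hilbert space ℍ, and H = {x ↦ ⟨w, Φ(x)⟩ : w ∈ ℍ}. Let Q : ℍ → ℍ be any weight approximation map and define Af_w(x) = ⟨Q(w), Φ(x)⟩. Then for any sample S = {x_1,...,x_m} ⊂ X, the empirical Rademacher complexity of the sensitivity class DH = {x ↦ |f(x) − Af(x)| : f ∈ H} satisfies R̂_S(DH) ≤ (sup_{w∈ℍ} ‖w − Q(w)‖_ℍ / m) · (Σ_{k=1}^m ‖Φ(x_k)‖²_ℍ)^{1/2}. In particular, this bound depends only on the weight distortion ‖w − Q(w)‖ and not on ‖w‖. -/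

import Mathlib

/-!
Put `u = w - Q w` and `C = sup_w ‖w - Q w‖`. The sensitivity class consists of the functions
`x ↦ |⟪u, Φ x⟫|` with `‖u‖ ≤ C`. The contraction principle for the 1-Lipschitz map `|·|`
removes the absolute value from the Rademacher sums; then
`∑ k, σ k * ⟪u, Φ (x k)⟫ = ⟪u, ∑ k, σ k • Φ (x k)⟫` is at most `C * ‖∑ k, σ k • Φ (x k)‖`,
and since distinct signs are orthogonal,
`E ‖∑ k, σ k • Φ (x k)‖ ≤ (E ‖∑ k, σ k • Φ (x k)‖²)^{1/2} = (∑ k, ‖Φ (x k)‖²)^{1/2}`.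
-/

open Finset RealInnerProductSpace

noncomputable def sgn (b : Bool) : ℝ := if b then 1 else -1

/-- Empirical Rademacher complexity of a function class `F` on the sample `s`. -/
noncomputable def empRad {X : Type*} (m : ℕ) (s : Fin m → X) (F : Set (X → ℝ)) : ℝ :=
  (1 / m) * ((1 / 2 ^ m) *
    ∑ ε : Fin m → Bool, sSup ((fun f => ∑ k, sgn (ε k) * f (s k)) '' F))

@[simp] lemma sgn_true : sgn true = 1 := rfl

@[simp] lemma sgn_false : sgn false = -1 := rfl

lemma sgn_mul_le_abs (b : Bool) (t : ℝ) : sgn b * t ≤ |t| := by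
  cases b
  · simpa using neg_le_abs t
  · simpa using le_abs_self t

lemma sgn_mul_self (b : Bool) : sgn b * sgn b = 1 := by
  cases b <;> norm_num

lemma ciSup_abs_add_add_ciSup_neg_abs_add_le {ι : Type*} [Nonempty ι] (f R : ι → ℝ)
    (h₁ : BddAbove (Set.range fun i => f i + R i))
    (h₂ : BddAbove (Set.range fun i => -f i + R i)) :
    (⨆ i, (|f i| + R i)) + ⨆ i, (-|f i| + R i) ≤ (⨆ i, (f i + R i)) + ⨆ i, (-f i + R i) := by
  have hpair : ∀ i j, (|f i| + R i) + (-|f j| + R j) ≤ (⨆ i, (f i + R i)) + ⨆ i, (-f i + R i) := by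
    intro i j
    have := abs_sub_abs_le_abs_sub (f i) (f j)
    rcases abs_cases (f i - f j) with ⟨h, -⟩ | ⟨h, -⟩
    · linarith [le_ciSup h₁ i, le_ciSup h₂ j]
    · linarith [le_ciSup h₂ i, le_ciSup h₁ j]
  have := ciSup_le fun i => le_sub_comm.1 (ciSup_le fun j => le_sub_iff_add_le'.2 (hpair i j))
  linarith

section Rademacher

variable {ι κ : Type*} [Fintype κ] {H : Type*} [NormedAddCommGroup H] [InnerProductSpace ℝ H]

noncomputable def rademacherSup (g : κ → ι → ℝ) (ε : κ → Bool) : ℝ :=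
  ⨆ i, ∑ k, sgn (ε k) * g k i

lemma bddAbove_range_sum_sgn_mul {g : κ → ι → ℝ}
    (hg : ∀ k, BddAbove (Set.range fun i => |g k i|)) (ε : κ → Bool) :
    BddAbove (Set.range fun i => ∑ k, sgn (ε k) * g k i) := by
  choose B hB using hg
  refine ⟨∑ k, B k, ?_⟩
  rintro _ ⟨i, rfl⟩
  exact sum_le_sum fun k _ => (sgn_mul_le_abs _ _).trans (hB k ⟨i, rfl⟩)

lemma rademacherSup_inner_le [Nonempty ι] {u : ι → H} {C : ℝ} (hu : ∀ i, ‖u i‖ ≤ C)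
    (ψ : κ → H) (ε : κ → Bool) :
    rademacherSup (fun k i => ⟪u i, ψ k⟫) ε ≤ C * ‖∑ k, sgn (ε k) • ψ k‖ :=
  ciSup_le fun i => by
    simp only [← real_inner_smul_right, ← inner_sum]
    exact (real_inner_le_norm _ _).trans (mul_le_mul_of_nonneg_right (hu i) (norm_nonneg _))

variable [DecidableEq κ]

lemma sum_eq_sum_funSplitAt {M : Type*} [AddCommMonoid M] (j : κ) (F : (κ → Bool) → M) :
    ∑ ε, F ε = ∑ τ : {k // k ≠ j} → Bool,
      (F ((Equiv.funSplitAt j Bool).symm (true, τ)) +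
        F ((Equiv.funSplitAt j Bool).symm (false, τ))) := by
  rw [← (Equiv.funSplitAt j Bool).symm.sum_comp, Fintype.sum_prod_type, Fintype.sum_bool,
    sum_add_distrib]

lemma sum_sgn_funSplitAt_symm_mul (j : κ) (b : Bool) (τ : {k // k ≠ j} → Bool) (a : κ → ℝ) :
    ∑ k, sgn ((Equiv.funSplitAt j Bool).symm (b, τ) k) * a k =
      sgn b * a j + ∑ k : {k // k ≠ j}, sgn (τ k) * a k := by
  rw [Fintype.sum_eq_add_sum_subtype_ne _ j]
  simp only [Equiv.funSplitAt_symm_apply, dite_true]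
  congr 1
  exact sum_congr rfl fun k _ => by rw [dif_neg k.2]

/-- One step of the Ledoux–Talagrand contraction: once the signs other than `ε j` are fixed,
the two values of `ε j` pair up as in `ciSup_abs_add_add_ciSup_neg_abs_add_le`. -/
lemma sum_rademacherSup_update_abs_le [Nonempty ι] {g : κ → ι → ℝ}
    (hg : ∀ k, BddAbove (Set.range fun i => |g k i|)) (j : κ) :
    ∑ ε, rademacherSup (Function.update g j fun i => |g j i|) ε ≤ ∑ ε, rademacherSup g ε := by
  rw [sum_eq_sum_funSplitAt j, sum_eq_sum_funSplitAt j]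
  refine sum_le_sum fun τ _ => ?_
  set R : ι → ℝ := fun i => ∑ k : {k // k ≠ j}, sgn (τ k) * g k i
  have hsplit : ∀ (b : Bool) (g' : κ → ι → ℝ), (∀ k : {k // k ≠ j}, g' k = g k) →
      rademacherSup g' ((Equiv.funSplitAt j Bool).symm (b, τ)) = ⨆ i, (sgn b * g' j i + R i) := by
    intro b g' hg'
    simp only [rademacherSup, sum_sgn_funSplitAt_symm_mul, hg', R]
  have hbdd : ∀ b : Bool, BddAbove (Set.range fun i => sgn b * g j i + R i) := fun b => by
    simpa only [sum_sgn_funSplitAt_symm_mul] using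
      bddAbove_range_sum_sgn_mul hg ((Equiv.funSplitAt j Bool).symm (b, τ))
  have hupd : ∀ k : {k // k ≠ j}, Function.update g j (fun i => |g j i|) k = g k :=
    fun k => Function.update_of_ne k.2 _ _
  rw [hsplit true _ hupd, hsplit false _ hupd, hsplit true g fun _ => rfl,
    hsplit false g fun _ => rfl]
  simpa using ciSup_abs_add_add_ciSup_neg_abs_add_le (g j) R (by simpa using hbdd true)
    (by simpa using hbdd false)

theorem sum_rademacherSup_abs_le [Nonempty ι] {g : κ → ι → ℝ}
    (hg : ∀ k, BddAbove (Set.range fun i => |g k i|)) :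
    ∑ ε, rademacherSup (fun k i => |g k i|) ε ≤ ∑ ε, rademacherSup g ε := by
  suffices ∀ S : Finset κ,
      ∑ ε, rademacherSup (fun k i => if k ∈ S then |g k i| else g k i) ε ≤
        ∑ ε, rademacherSup g ε by
    simpa using this univ
  intro S
  induction S using Finset.induction_on with
  | empty => simp
  | insert j S hj ih =>
    set gS : κ → ι → ℝ := fun k i => if k ∈ S then |g k i| else g k i
    have hgS : ∀ k, BddAbove (Set.range fun i => |gS k i|) := fun k => by
      by_cases hk : k ∈ S <;> simpa [gS, hk] using hg k
    have hins : (fun k i => if k ∈ insert j S then |g k i| else g k i) =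
        Function.update gS j fun i => |gS j i| := by
      funext k i
      by_cases hk : k = j
      · subst hk; simp [gS, hj]
      · simp [gS, hk]
    rw [hins]
    exact (sum_rademacherSup_update_abs_le hgS j).trans ih

lemma sum_sgn_mul_sgn (k l : κ) :
    ∑ ε : κ → Bool, sgn (ε k) * sgn (ε l) = if k = l then 2 ^ Fintype.card κ else 0 := by
  split_ifs with hkl
  · subst hkl
    simp [sgn_mul_self]
  · rw [sum_eq_sum_funSplitAt k]
    refine sum_eq_zero fun τ _ => ?_
    simp [dif_neg (Ne.symm hkl)]

lemma sum_norm_sum_sgn_smul_sq (ψ : κ → H) :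
    ∑ ε : κ → Bool, ‖∑ k, sgn (ε k) • ψ k‖ ^ 2 = 2 ^ Fintype.card κ * ∑ k, ‖ψ k‖ ^ 2 := by
  simp_rw [← real_inner_self_eq_norm_sq, sum_inner, inner_sum, real_inner_smul_left,
    real_inner_smul_right, ← mul_assoc]
  rw [sum_comm]
  simp_rw [sum_comm (γ := κ → Bool), ← sum_mul, sum_sgn_mul_sgn, ite_mul, zero_mul,
    sum_ite_eq, if_pos (mem_univ _), mul_sum]

lemma sum_norm_sum_sgn_smul_le (ψ : κ → H) :
    ∑ ε : κ → Bool, ‖∑ k, sgn (ε k) • ψ k‖ ≤ 2 ^ Fintype.card κ * √(∑ k, ‖ψ k‖ ^ 2) := by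
  refine (pow_le_pow_iff_left₀ (by positivity) (by positivity) two_ne_zero).1 ?_
  calc (∑ ε : κ → Bool, ‖∑ k, sgn (ε k) • ψ k‖) ^ 2
      ≤ #(univ : Finset (κ → Bool)) * ∑ ε : κ → Bool, ‖∑ k, sgn (ε k) • ψ k‖ ^ 2 :=
        sq_sum_le_card_mul_sum_sq
    _ = (2 ^ Fintype.card κ * √(∑ k, ‖ψ k‖ ^ 2)) ^ 2 := by
        rw [sum_norm_sum_sgn_smul_sq, mul_pow, Real.sq_sqrt (by positivity)]
        simp [sq, mul_assoc]

end Rademacher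

theorem stmt9_general {X : Type*} {H : Type*} [NormedAddCommGroup H] [InnerProductSpace ℝ H]
    (Φ : X → H) (Q : H → H) (m : ℕ) (s : Fin m → X)
    (hbdd : BddAbove (Set.range fun w : H => ‖w - Q w‖)) :
    empRad m s
        (Set.range fun w : H => fun x : X => |⟪w, Φ x⟫ - ⟪Q w, Φ x⟫|) ≤
      sSup (Set.range fun w : H => ‖w - Q w‖) / m *
        Real.sqrt (∑ k, ‖Φ (s k)‖ ^ 2) := by
  set C := sSup (Set.range fun w : H => ‖w - Q w‖)
  have hC : ∀ w, ‖w - Q w‖ ≤ C := fun w => le_csSup hbdd ⟨w, rfl⟩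
  have hC₀ : 0 ≤ C := (norm_nonneg _).trans (hC 0)
  set g : Fin m → H → ℝ := fun k w => ⟪w - Q w, Φ (s k)⟫
  have hg : ∀ k, BddAbove (Set.range fun w => |g k w|) := fun k =>
    ⟨C * ‖Φ (s k)‖, by
      rintro _ ⟨w, rfl⟩
      exact (abs_real_inner_le_norm _ _).trans (mul_le_mul_of_nonneg_right (hC w) (norm_nonneg _))⟩
  have hsup : ∀ ε : Fin m → Bool,
      sSup ((fun f => ∑ k, sgn (ε k) * f (s k)) ''
        Set.range fun w : H => fun x : X => |⟪w, Φ x⟫ - ⟪Q w, Φ x⟫|) =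
      rademacherSup (fun k w => |g k w|) ε := by
    intro ε
    simp only [← Set.range_comp, g, inner_sub_left]
    rfl
  calc empRad m s _ = 1 / m * (1 / 2 ^ m *
        ∑ ε : Fin m → Bool, rademacherSup (fun k w => |g k w|) ε) := by
        simp only [empRad, hsup]
    _ ≤ 1 / m * (1 / 2 ^ m * ∑ ε : Fin m → Bool, rademacherSup g ε) := by
        gcongr 1 / m * (1 / 2 ^ m * ?_)
        exact sum_rademacherSup_abs_le hg
    _ ≤ 1 / m * (1 / 2 ^ m * ∑ ε : Fin m → Bool, C * ‖∑ k, sgn (ε k) • Φ (s k)‖) := by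
        gcongr with ε
        exact rademacherSup_inner_le hC _ ε
    _ ≤ 1 / m * (1 / 2 ^ m * (C * (2 ^ m * √(∑ k, ‖Φ (s k)‖ ^ 2)))) := by
        rw [← mul_sum]
        gcongr
        simpa using sum_norm_sum_sgn_smul_le fun k => Φ (s k)
    _ = C / m * √(∑ k, ‖Φ (s k)‖ ^ 2) := by field_simp

/-- For generalised linear predictors `f_w(x) = ⟨w, Φ(x)⟩` with weight
approximation `Af_w(x) = ⟨Q(w), Φ(x)⟩`, the empirical Rademacher complexity of
the sensitivity class is bounded by
`(sup_w ‖w − Q(w)‖ / m) · (Σ_k ‖Φ(x_k)‖²)^{1/2}`, depending only on the weight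
distortion and not on `‖w‖`. -/
theorem stmt9 {X : Type*} {H : Type*} [NormedAddCommGroup H] [InnerProductSpace ℝ H]
    (Φ : X → H) (Q : H → H) (m : ℕ) (hm : 0 < m) (s : Fin m → X)
    (hbdd : BddAbove (Set.range fun w : H => ‖w - Q w‖)) :
    empRad m s
        (Set.range fun w : H => fun x : X => |⟪w, Φ x⟫ - ⟪Q w, Φ x⟫|) ≤
      sSup (Set.range fun w : H => ‖w - Q w‖) / m *
        Real.sqrt (∑ k, ‖Φ (s k)‖ ^ 2) :=
  stmt9_general Φ Q m s hbdd
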